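/- Let α > 0, let κ ∈ (1,2), let m : [0,α] → ℝ be continuous, and let Φ(ζ) = ζ^κ m(ζ) for ζ ∈ (0,α]. Let G be the kernel associated with α and Φ. Then lim_{θ → 0} |θ|^{2−κ} G(θ) = m(0) · (α^{κ−1}/√π) · ∫₀¹ exp(−α²/(4σ²)) (1−σ²)^{−κ/2} dσ; in particular G(θ) grows like a constant multiple of |θ|^{κ−2} as θ → 0 when m(0) ≠ 0. -/

import Mathlib

open MeasureTheory Set Filter Topology

/-- The kernel G associated with α and Φ:
G(θ) = (α/√π) ∫_{α|θ|}^{α} (ζ² - α²θ²)^{-1/2}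
         exp(-α²ζ²(1-θ)²/(4(ζ² - α²θ²))) Φ(ζ)/ζ² dζ. -/
noncomputable def kernelG (α : ℝ) (Φ : ℝ → ℝ) (θ : ℝ) : ℝ :=
  (α / Real.sqrt Real.pi) *
    ∫ ζ in (α * |θ|)..α,
      (1 / Real.sqrt (ζ ^ 2 - α ^ 2 * θ ^ 2)) *
        Real.exp (-(α ^ 2 * ζ ^ 2 * (1 - θ) ^ 2) / (4 * (ζ ^ 2 - α ^ 2 * θ ^ 2))) *
        (Φ ζ / ζ ^ 2)


set_option maxHeartbeats 1000000 in
lemma kernelG_subst (α κ : ℝ) (hα : 0 < α) (m : ℝ → ℝ) (θ : ℝ) (hθ : θ ≠ 0) (hθ1 : |θ| < 1) :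
    |θ| ^ (2 - κ) * kernelG α (fun ζ => ζ ^ κ * m ζ) θ
      = (α ^ (κ - 1) / Real.sqrt Real.pi) *
        ∫ σ in Ioo (0:ℝ) 1,
          (Ioo (0:ℝ) (Real.sqrt (1 - θ ^ 2))).indicator
            (fun σ => Real.exp (-(α ^ 2 * (1 - θ) ^ 2) / (4 * σ ^ 2)) *
              (1 - σ ^ 2) ^ (-(κ / 2)) * m (α * |θ| / Real.sqrt (1 - σ ^ 2))) σ := by
  have hθpos : 0 < |θ| := abs_pos.mpr hθ
  set c : ℝ := α * |θ| with hc_def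
  have hc : 0 < c := mul_pos hα hθpos
  have hcα : c < α := by
    calc c = α * |θ| := rfl
    _ < α * 1 := by exact mul_lt_mul_of_pos_left hθ1 hα
    _ = α := mul_one α
  have hθsq : θ ^ 2 < 1 := by
    have := abs_lt.mp hθ1
    nlinarith [this.1, this.2]
  set s₀ : ℝ := Real.sqrt (1 - θ ^ 2) with hs₀_def
  have hs₀pos : 0 < s₀ := Real.sqrt_pos.mpr (by linarith)
  have hs₀sq : s₀ ^ 2 = 1 - θ ^ 2 := Real.sq_sqrt (by linarith)
  have hs₀lt : s₀ < 1 := by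
    have := (Real.sqrt_lt' one_pos).mpr (show 1 - θ ^ 2 < 1 ^ 2 by nlinarith [hθpos, sq_abs θ, sq_nonneg θ, abs_pos.mpr hθ])
    simpa [hs₀_def] using this
  -- the substitution map
  set f : ℝ → ℝ := fun σ => c / Real.sqrt (1 - σ ^ 2) with hf_def
  set f' : ℝ → ℝ := fun σ => c * σ / ((1 - σ ^ 2) * Real.sqrt (1 - σ ^ 2)) with hf'_def
  have htpos : ∀ σ ∈ Ioo (0:ℝ) s₀, 0 < 1 - σ ^ 2 := by
    intro σ hσ
    have : σ ^ 2 < s₀ ^ 2 := by nlinarith [hσ.1, hσ.2]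
    nlinarith [hs₀sq, sq_nonneg θ]
  have hderiv : ∀ σ ∈ Ioo (0:ℝ) s₀, HasDerivWithinAt f (f' σ) (Ioo (0:ℝ) s₀) σ := by
    intro σ hσ
    have ht : 0 < 1 - σ ^ 2 := htpos σ hσ
    have hsq : Real.sqrt (1 - σ ^ 2) ^ 2 = 1 - σ ^ 2 := Real.sq_sqrt ht.le
    have hsqpos : 0 < Real.sqrt (1 - σ ^ 2) := Real.sqrt_pos.mpr ht
    have h1 : HasDerivAt (fun x : ℝ => 1 - x ^ 2) (-(2 * σ)) σ := by
      simpa using (hasDerivAt_pow 2 σ).const_sub 1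
    have h2 : HasDerivAt (fun x : ℝ => Real.sqrt (1 - x ^ 2))
        (1 / (2 * Real.sqrt (1 - σ ^ 2)) * (-(2 * σ))) σ :=
      (Real.hasDerivAt_sqrt ht.ne').comp σ h1
    have h3 : HasDerivAt f
        ((0 * Real.sqrt (1 - σ ^ 2) - c * (1 / (2 * Real.sqrt (1 - σ ^ 2)) * (-(2 * σ)))) /
          (Real.sqrt (1 - σ ^ 2)) ^ 2) σ :=
      (hasDerivAt_const σ c).div h2 hsqpos.ne'
    have heq : (0 * Real.sqrt (1 - σ ^ 2) - c * (1 / (2 * Real.sqrt (1 - σ ^ 2)) * (-(2 * σ)))) /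
          (Real.sqrt (1 - σ ^ 2)) ^ 2 = f' σ := by
      rw [hf'_def]
      simp only
      rw [hsq]
      rw [div_eq_div_iff (by positivity) (by positivity)]
      field_simp
      ring
    rw [heq] at h3
    exact h3.hasDerivWithinAt
  have hmono : StrictMonoOn f (Ioo (0:ℝ) s₀) := by
    intro x hx y hy hxy
    have hx1 : 0 < 1 - x ^ 2 := htpos x hx
    have hy1 : 0 < 1 - y ^ 2 := htpos y hy
    have h1 : Real.sqrt (1 - y ^ 2) < Real.sqrt (1 - x ^ 2) :=
      Real.sqrt_lt_sqrt hy1.le (by nlinarith [hx.1, hy.1])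
    exact div_lt_div_of_pos_left hc (Real.sqrt_pos.mpr hy1) h1
  have himage : f '' Ioo 0 s₀ = Ioo c α := by
    apply Subset.antisymm
    · rintro ζ ⟨σ, hσ, rfl⟩
      have ht : 0 < 1 - σ ^ 2 := htpos σ hσ
      have hsqpos : 0 < Real.sqrt (1 - σ ^ 2) := Real.sqrt_pos.mpr ht
      constructor
      · have h1 : Real.sqrt (1 - σ ^ 2) < 1 :=
          (Real.sqrt_lt' one_pos).mpr (by nlinarith [hσ.1])
        rw [hf_def]
        simp only
        rw [lt_div_iff₀ hsqpos]
        nlinarith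
      · have h1 : |θ| < Real.sqrt (1 - σ ^ 2) := by
          rw [show |θ| = Real.sqrt (θ ^ 2) from (Real.sqrt_sq_eq_abs θ).symm]
          exact Real.sqrt_lt_sqrt (sq_nonneg θ) (by nlinarith [hσ.2, hs₀sq, hσ.1])
        rw [hf_def]
        simp only
        rw [div_lt_iff₀ hsqpos]
        calc c = α * |θ| := rfl
        _ < α * Real.sqrt (1 - σ ^ 2) := by exact mul_lt_mul_of_pos_left h1 hα
    · rintro ζ ⟨hζ1, hζ2⟩
      have hζpos : 0 < ζ := lt_trans hc hζ1
      have hcζ : c ^ 2 < ζ ^ 2 := by nlinarith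
      have ht : 0 < 1 - c ^ 2 / ζ ^ 2 := by
        rw [sub_pos, div_lt_one (by positivity)]; exact hcζ
      refine ⟨Real.sqrt (1 - c ^ 2 / ζ ^ 2), ⟨Real.sqrt_pos.mpr ht, ?_⟩, ?_⟩
      · apply Real.sqrt_lt_sqrt ht.le
        have hζα : ζ ^ 2 < α ^ 2 := by nlinarith
        have hc2 : c ^ 2 = α ^ 2 * θ ^ 2 := by
          rw [hc_def, mul_pow, sq_abs]
        rw [sub_lt_sub_iff_left, hc2]
        have hθ2 : 0 < θ ^ 2 := by nlinarith [sq_abs θ, mul_pos hθpos hθpos]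
        rw [lt_div_iff₀ (by positivity : (0:ℝ) < ζ ^ 2)]
        nlinarith [mul_pos (sub_pos.mpr hζα) hθ2]
      · have hsq : Real.sqrt (1 - c ^ 2 / ζ ^ 2) ^ 2 = 1 - c ^ 2 / ζ ^ 2 := Real.sq_sqrt ht.le
        rw [hf_def]
        simp only
        rw [hsq]
        have h5 : 1 - (1 - c ^ 2 / ζ ^ 2) = (c / ζ) ^ 2 := by field_simp; ring
        rw [h5, Real.sqrt_sq (by positivity)]
        field_simp
  -- the substitution
  have hc2' : α ^ 2 * θ ^ 2 = c ^ 2 := by rw [hc_def, mul_pow, sq_abs]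
  have key : ∀ σ ∈ Ioo (0:ℝ) s₀,
      |f' σ| • ((1 / Real.sqrt ((f σ) ^ 2 - α ^ 2 * θ ^ 2)) *
          Real.exp (-(α ^ 2 * (f σ) ^ 2 * (1 - θ) ^ 2) / (4 * ((f σ) ^ 2 - α ^ 2 * θ ^ 2))) *
          ((f σ) ^ κ * m (f σ) / (f σ) ^ 2))
        = c ^ (κ - 2) * (Real.exp (-(α ^ 2 * (1 - θ) ^ 2) / (4 * σ ^ 2)) *
            (1 - σ ^ 2) ^ (-(κ / 2)) * m (f σ)) := by
    intro σ hσ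
    obtain ⟨hσ0, hσs⟩ := hσ
    have ht : 0 < 1 - σ ^ 2 := htpos σ ⟨hσ0, hσs⟩
    set B : ℝ := Real.sqrt (1 - σ ^ 2) with hB_def
    have hB : 0 < B := Real.sqrt_pos.mpr ht
    have hB2 : B ^ 2 = 1 - σ ^ 2 := Real.sq_sqrt ht.le
    have hfσ : f σ = c / B := rfl
    have hfσ2 : (f σ) ^ 2 = c ^ 2 / B ^ 2 := by rw [hfσ, div_pow]
    have h1 : (f σ) ^ 2 - α ^ 2 * θ ^ 2 = (c * σ / B) ^ 2 := by
      rw [hfσ2, hc2', hB2]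
      field_simp
      linear_combination σ ^ 2 * hB2
    have h2 : Real.sqrt ((f σ) ^ 2 - α ^ 2 * θ ^ 2) = c * σ / B := by
      rw [h1, Real.sqrt_sq (by positivity)]
    have h3 : -(α ^ 2 * (f σ) ^ 2 * (1 - θ) ^ 2) / (4 * ((f σ) ^ 2 - α ^ 2 * θ ^ 2))
        = -(α ^ 2 * (1 - θ) ^ 2) / (4 * σ ^ 2) := by
      rw [h1, hfσ2, div_pow, mul_pow]
      rw [div_eq_div_iff (by positivity) (by positivity)]
      ring
    have h4 : (f σ) ^ κ = c ^ (κ - 2) * c ^ 2 / B ^ κ := by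
      rw [hfσ, Real.div_rpow hc.le (Real.sqrt_nonneg _)]
      congr 1
      rw [← Real.rpow_natCast c 2, ← Real.rpow_add hc]
      norm_num
    have h5 : (1 - σ ^ 2) ^ (-(κ / 2)) = (B ^ κ)⁻¹ := by
      rw [Real.rpow_neg ht.le]
      congr 1
      rw [hB_def, Real.sqrt_eq_rpow, ← Real.rpow_mul ht.le]
      ring_nf
    have h6 : |f' σ| = c * σ / (B ^ 2 * B) := by
      rw [abs_of_nonneg (by rw [hf'_def]; positivity), hf'_def]
      simp only
      rw [hB2]
    have hBκ : 0 < B ^ κ := Real.rpow_pos_of_pos hB κ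
    rw [smul_eq_mul, h2, h3, h4, h5, h6, hfσ2]
    field_simp
  have hIoo : Ioo (0:ℝ) 1 ∩ Ioo (0:ℝ) s₀ = Ioo (0:ℝ) s₀ :=
    inter_eq_self_of_subset_right (Ioo_subset_Ioo le_rfl hs₀lt.le)
  have hsub : kernelG α (fun ζ => ζ ^ κ * m ζ) θ
      = (α / Real.sqrt Real.pi) * (c ^ (κ - 2) *
        ∫ σ in Ioo (0:ℝ) 1,
          (Ioo (0:ℝ) s₀).indicator
            (fun σ => Real.exp (-(α ^ 2 * (1 - θ) ^ 2) / (4 * σ ^ 2)) *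
              (1 - σ ^ 2) ^ (-(κ / 2)) * m (c / Real.sqrt (1 - σ ^ 2))) σ) := by
    rw [kernelG, ← hc_def, intervalIntegral.integral_of_le hcα.le, integral_Ioc_eq_integral_Ioo,
      ← himage,
      integral_image_eq_integral_abs_deriv_smul measurableSet_Ioo hderiv (hmono.injOn)]
    rw [setIntegral_indicator measurableSet_Ioo, hIoo]
    rw [setIntegral_congr_fun measurableSet_Ioo (fun σ hσ => key σ hσ)]
    rw [integral_const_mul]
  set I : ℝ := ∫ σ in Ioo (0:ℝ) 1,
          (Ioo (0:ℝ) s₀).indicator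
            (fun σ => Real.exp (-(α ^ 2 * (1 - θ) ^ 2) / (4 * σ ^ 2)) *
              (1 - σ ^ 2) ^ (-(κ / 2)) * m (c / Real.sqrt (1 - σ ^ 2))) σ with hI_def
  rw [hsub]
  have hsplit : c ^ (κ - 2) = α ^ (κ - 2) * |θ| ^ (κ - 2) := Real.mul_rpow hα.le (abs_nonneg θ)
  have hab1 : |θ| ^ (2 - κ) * |θ| ^ (κ - 2) = 1 := by
    rw [← Real.rpow_add hθpos]
    norm_num
  have hab2 : α * α ^ (κ - 2) = α ^ (κ - 1) := by
    nth_rewrite 1 [← Real.rpow_one α]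
    rw [← Real.rpow_add hα]
    rw [show (1:ℝ) + (κ - 2) = κ - 1 by ring]
  rw [hsplit]
  calc |θ| ^ (2 - κ) * (α / Real.sqrt Real.pi * (α ^ (κ - 2) * |θ| ^ (κ - 2) * I))
      = (|θ| ^ (2 - κ) * |θ| ^ (κ - 2)) * ((α * α ^ (κ - 2)) / Real.sqrt Real.pi * I) := by
        ring
    _ = α ^ (κ - 1) / Real.sqrt Real.pi * I := by rw [hab1, hab2, one_mul]


theorem kernelG_asymptotics_main
    (α κ : ℝ) (hα : 0 < α) (hκ₁ : 1 < κ) (hκ₂ : κ < 2)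
    (m : ℝ → ℝ) (hm : ContinuousOn m (Icc 0 α)) :
    Tendsto (fun θ : ℝ =>
        (α ^ (κ - 1) / Real.sqrt Real.pi) *
        ∫ σ in Ioo (0:ℝ) 1,
          (Ioo (0:ℝ) (Real.sqrt (1 - θ ^ 2))).indicator
            (fun σ => Real.exp (-(α ^ 2 * (1 - θ) ^ 2) / (4 * σ ^ 2)) *
              (1 - σ ^ 2) ^ (-(κ / 2)) * m (α * |θ| / Real.sqrt (1 - σ ^ 2))) σ)
      (nhdsWithin 0 {(0:ℝ)}ᶜ)
      (nhds (m 0 * (α ^ (κ - 1) / Real.sqrt Real.pi) *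
        ∫ σ in (0:ℝ)..1, Real.exp (-α ^ 2 / (4 * σ ^ 2)) * (1 - σ ^ 2) ^ (-(κ / 2)))) := by
  obtain ⟨M, hM⟩ := (isCompact_Icc : IsCompact (Icc (0:ℝ) α)).exists_bound_of_continuousOn hm
  have hM0 : 0 ≤ M := le_trans (norm_nonneg (m 0)) (hM 0 ⟨le_refl 0, hα.le⟩)
  set l : Filter ℝ := nhdsWithin 0 {(0:ℝ)}ᶜ with hl_def
  set f₀ : ℝ → ℝ := fun σ => Real.exp (-α ^ 2 / (4 * σ ^ 2)) * (1 - σ ^ 2) ^ (-(κ / 2)) * m 0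
    with hf₀_def
  set F : ℝ → ℝ → ℝ := fun θ => (Ioo (0:ℝ) (Real.sqrt (1 - θ ^ 2))).indicator
            (fun σ => Real.exp (-(α ^ 2 * (1 - θ) ^ 2) / (4 * σ ^ 2)) *
              (1 - σ ^ 2) ^ (-(κ / 2)) * m (α * |θ| / Real.sqrt (1 - σ ^ 2))) with hF_def
  have hsmall : ∀ᶠ θ in l, θ ≠ 0 ∧ |θ| < 1 := by
    have h1 : ∀ᶠ θ in l, θ ≠ 0 :=
      eventually_mem_nhdsWithin.mono (fun θ hθ => hθ)
    have h2 : ∀ᶠ θ : ℝ in nhds 0, |θ| < 1 := by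
      have := Metric.ball_mem_nhds (0:ℝ) one_pos
      filter_upwards [this] with θ hθ
      simpa [Real.dist_eq] using hθ
    exact h1.and (h2.filter_mono nhdsWithin_le_nhds)
  -- main DCT step
  have hDCT : Tendsto (fun θ => ∫ σ in Ioo (0:ℝ) 1, F θ σ) l
      (nhds (∫ σ in Ioo (0:ℝ) 1, f₀ σ)) := by
    apply MeasureTheory.tendsto_integral_filter_of_dominated_convergence
      (bound := fun σ => M * (1 - σ) ^ (-(κ / 2)))
    · -- measurability
      filter_upwards [hsmall] with θ ⟨hθ, hθ1⟩
      have hθsq : θ ^ 2 < 1 := by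
        nlinarith [(abs_lt.mp hθ1).1, (abs_lt.mp hθ1).2]
      set s₀ : ℝ := Real.sqrt (1 - θ ^ 2) with hs₀_def
      have hs₀sq : s₀ ^ 2 = 1 - θ ^ 2 := Real.sq_sqrt (by linarith)
      have hs₀lt : s₀ ≤ 1 := by
        rw [hs₀_def]
        exact Real.sqrt_le_one.mpr (by nlinarith [sq_nonneg θ])
      rw [hF_def]
      rw [aestronglyMeasurable_indicator_iff measurableSet_Ioo]
      rw [Measure.restrict_restrict measurableSet_Ioo,
        inter_eq_self_of_subset_left (Ioo_subset_Ioo le_rfl hs₀lt)]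
      apply ContinuousOn.aestronglyMeasurable _ measurableSet_Ioo
      have htpos : ∀ σ ∈ Ioo (0:ℝ) s₀, 0 < 1 - σ ^ 2 := by
        intro σ hσ
        have : σ ^ 2 < s₀ ^ 2 := by nlinarith [hσ.1, hσ.2]
        nlinarith [hs₀sq, sq_nonneg θ]
      apply ContinuousOn.mul
      apply ContinuousOn.mul
      · apply Real.continuous_exp.comp_continuousOn
        apply ContinuousOn.div continuousOn_const (by fun_prop)
        intro σ hσ
        have : 0 < σ := hσ.1
        positivity
      · apply ContinuousOn.rpow_const (by fun_prop)
        intro σ hσ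
        exact Or.inl (htpos σ hσ).ne'
      · apply hm.comp
        · apply ContinuousOn.div continuousOn_const
          · apply Real.continuous_sqrt.comp_continuousOn (by fun_prop)
          · intro σ hσ
            exact (Real.sqrt_pos.mpr (htpos σ hσ)).ne'
        · intro σ hσ
          have ht := htpos σ hσ
          have hsq : 0 < Real.sqrt (1 - σ ^ 2) := Real.sqrt_pos.mpr ht
          constructor
          · positivity
          · rw [div_le_iff₀ hsq]
            have h1 : |θ| ≤ Real.sqrt (1 - σ ^ 2) := by
              rw [show |θ| = Real.sqrt (θ ^ 2) from (Real.sqrt_sq_eq_abs θ).symm]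
              exact Real.sqrt_le_sqrt (by nlinarith [hσ.2, hs₀sq, hσ.1])
            calc α * |θ| ≤ α * Real.sqrt (1 - σ ^ 2) :=
                  mul_le_mul_of_nonneg_left h1 hα.le
            _ = α * Real.sqrt (1 - σ ^ 2) * 1 := (mul_one _).symm
            _ = α * Real.sqrt (1 - σ ^ 2) := mul_one _
    · -- bound
      filter_upwards [hsmall] with θ ⟨hθ, hθ1⟩
      rw [ae_restrict_iff' measurableSet_Ioo]
      apply ae_of_all
      intro σ hσ
      obtain ⟨hσ0, hσ1⟩ := hσ
      have ht1 : 0 < 1 - σ := by linarith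
      have hrpow_pos : 0 < (1 - σ) ^ (-(κ / 2)) := Real.rpow_pos_of_pos ht1 _
      by_cases hmem : σ ∈ Ioo (0:ℝ) (Real.sqrt (1 - θ ^ 2))
      · rw [hF_def]
        simp only [indicator_of_mem hmem]
        have ht : 0 < 1 - σ ^ 2 := by nlinarith
        have hsqpos : 0 < Real.sqrt (1 - σ ^ 2) := Real.sqrt_pos.mpr ht
        have hθs : θ ^ 2 ≤ 1 - σ ^ 2 := by
          have := hmem.2
          have h2 : σ ^ 2 < 1 - θ ^ 2 := by
            have := (Real.lt_sqrt hσ0.le).mp hmem.2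
            linarith
          linarith
        have harg : α * |θ| / Real.sqrt (1 - σ ^ 2) ∈ Icc (0:ℝ) α := by
          constructor
          · positivity
          · rw [div_le_iff₀ hsqpos]
            have h1 : |θ| ≤ Real.sqrt (1 - σ ^ 2) := by
              rw [show |θ| = Real.sqrt (θ ^ 2) from (Real.sqrt_sq_eq_abs θ).symm]
              exact Real.sqrt_le_sqrt hθs
            nlinarith [mul_le_mul_of_nonneg_left h1 hα.le]
        have hb1 : Real.exp (-(α ^ 2 * (1 - θ) ^ 2) / (4 * σ ^ 2)) ≤ 1 := by
          apply Real.exp_le_one_iff.mpr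
          apply div_nonpos_of_nonpos_of_nonneg
          · nlinarith [sq_nonneg (α * (1 - θ))]
          · positivity
        have hb2 : (1 - σ ^ 2) ^ (-(κ / 2)) ≤ (1 - σ) ^ (-(κ / 2)) := by
          apply Real.rpow_le_rpow_of_nonpos ht1 (by nlinarith)
          linarith [div_nonneg (le_of_lt (lt_trans one_pos hκ₁)) (by norm_num : (0:ℝ) ≤ 2)]
        have hb3 : ‖m (α * |θ| / Real.sqrt (1 - σ ^ 2))‖ ≤ M := hM _ harg
        have hexp_pos : 0 < Real.exp (-(α ^ 2 * (1 - θ) ^ 2) / (4 * σ ^ 2)) := Real.exp_pos _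
        have hr_pos : 0 ≤ (1 - σ ^ 2) ^ (-(κ / 2)) := Real.rpow_nonneg ht.le _
        rw [norm_mul, norm_mul]
        rw [Real.norm_eq_abs, Real.norm_eq_abs, abs_of_pos hexp_pos, abs_of_nonneg hr_pos]
        calc Real.exp (-(α ^ 2 * (1 - θ) ^ 2) / (4 * σ ^ 2)) * (1 - σ ^ 2) ^ (-(κ / 2)) *
              ‖m (α * |θ| / Real.sqrt (1 - σ ^ 2))‖
            ≤ 1 * (1 - σ) ^ (-(κ / 2)) * M := by
              apply mul_le_mul _ hb3 (norm_nonneg _) (by positivity)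
              exact mul_le_mul hb1 hb2 hr_pos zero_le_one
        _ = M * (1 - σ) ^ (-(κ / 2)) := by ring
      · rw [hF_def]
        simp only [indicator_of_notMem hmem]
        simp only [norm_zero]
        positivity
    · -- integrability of bound
      have h1 : IntervalIntegrable (fun x : ℝ => x ^ (-(κ / 2))) volume 0 1 :=
        intervalIntegral.intervalIntegrable_rpow' (by linarith)
      have h2 : IntervalIntegrable (fun x : ℝ => (1 - x) ^ (-(κ / 2))) volume 0 1 := by
        have := (h1.comp_sub_left 1).symm
        simpa using this
      have h3 : IntegrableOn (fun x : ℝ => (1 - x) ^ (-(κ / 2))) (Ioo 0 1) := by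
        rw [← intervalIntegrable_iff_integrableOn_Ioo_of_le zero_le_one]
        exact h2
      exact (h3.const_mul M)
    · -- pointwise limit
      rw [ae_restrict_iff' measurableSet_Ioo]
      apply ae_of_all
      intro σ hσ
      obtain ⟨hσ0, hσ1⟩ := hσ
      have ht : 0 < 1 - σ ^ 2 := by nlinarith
      have hsqpos : 0 < Real.sqrt (1 - σ ^ 2) := Real.sqrt_pos.mpr ht
      have hev : ∀ᶠ θ in l, F θ σ =
          Real.exp (-(α ^ 2 * (1 - θ) ^ 2) / (4 * σ ^ 2)) *
            (1 - σ ^ 2) ^ (-(κ / 2)) * m (α * |θ| / Real.sqrt (1 - σ ^ 2)) := by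
        have h2 : ∀ᶠ θ : ℝ in nhds 0, |θ| < Real.sqrt (1 - σ ^ 2) := by
          have := Metric.ball_mem_nhds (0:ℝ) hsqpos
          filter_upwards [this] with θ hθ
          simpa [Real.dist_eq] using hθ
        filter_upwards [h2.filter_mono nhdsWithin_le_nhds] with θ hθ
        have hmem : σ ∈ Ioo (0:ℝ) (Real.sqrt (1 - θ ^ 2)) := by
          refine ⟨hσ0, ?_⟩
          rw [Real.lt_sqrt hσ0.le]
          have : θ ^ 2 < 1 - σ ^ 2 := by
            have h3 := Real.sq_sqrt ht.le
            nlinarith [abs_nonneg θ, sq_abs θ, hθ]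
          linarith
        rw [hF_def]
        simp only [indicator_of_mem hmem]
      apply Tendsto.congr' (hev.mono fun θ h => h.symm)
      have t1 : Tendsto (fun θ : ℝ => Real.exp (-(α ^ 2 * (1 - θ) ^ 2) / (4 * σ ^ 2))) l
          (nhds (Real.exp (-α ^ 2 / (4 * σ ^ 2)))) := by
        have hc : Continuous (fun θ : ℝ => Real.exp (-(α ^ 2 * (1 - θ) ^ 2) / (4 * σ ^ 2))) := by
          fun_prop
        have := hc.tendsto 0
        have heq : Real.exp (-(α ^ 2 * (1 - (0:ℝ)) ^ 2) / (4 * σ ^ 2)) =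
            Real.exp (-α ^ 2 / (4 * σ ^ 2)) := by norm_num
        rw [heq] at this
        exact this.mono_left nhdsWithin_le_nhds
      have t2 : Tendsto (fun θ : ℝ => m (α * |θ| / Real.sqrt (1 - σ ^ 2))) l (nhds (m 0)) := by
        have hcm : Tendsto m (nhdsWithin 0 (Icc 0 α)) (nhds (m 0)) :=
          (hm 0 ⟨le_refl 0, hα.le⟩).tendsto
        apply hcm.comp
        rw [tendsto_nhdsWithin_iff]
        constructor
        · have hc : Continuous (fun θ : ℝ => α * |θ| / Real.sqrt (1 - σ ^ 2)) := by fun_prop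
          have := hc.tendsto 0
          simp only [abs_zero, mul_zero, zero_div] at this
          exact this.mono_left nhdsWithin_le_nhds
        · have h2 : ∀ᶠ θ : ℝ in nhds 0, |θ| < Real.sqrt (1 - σ ^ 2) := by
            have := Metric.ball_mem_nhds (0:ℝ) hsqpos
            filter_upwards [this] with θ hθ
            simpa [Real.dist_eq] using hθ
          filter_upwards [h2.filter_mono nhdsWithin_le_nhds] with θ hθ
          constructor
          · positivity
          · rw [div_le_iff₀ hsqpos]
            nlinarith [abs_nonneg θ, hθ, hα.le]
      exact (t1.mul tendsto_const_nhds).mul t2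
  -- assemble
  have hfin : (α ^ (κ - 1) / Real.sqrt Real.pi) * ∫ σ in Ioo (0:ℝ) 1, f₀ σ
      = m 0 * (α ^ (κ - 1) / Real.sqrt Real.pi) *
        ∫ σ in (0:ℝ)..1, Real.exp (-α ^ 2 / (4 * σ ^ 2)) * (1 - σ ^ 2) ^ (-(κ / 2)) := by
    rw [intervalIntegral.integral_of_le zero_le_one, integral_Ioc_eq_integral_Ioo]
    rw [hf₀_def]
    rw [show (∫ σ in Ioo (0:ℝ) 1,
        Real.exp (-α ^ 2 / (4 * σ ^ 2)) * (1 - σ ^ 2) ^ (-(κ / 2)) * m 0)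
      = (∫ σ in Ioo (0:ℝ) 1,
        Real.exp (-α ^ 2 / (4 * σ ^ 2)) * (1 - σ ^ 2) ^ (-(κ / 2))) * m 0 from
      integral_mul_const _ _]
    ring
  rw [← hfin]
  exact hDCT.const_mul _

/-- For Φ(ζ) = ζ^κ m(ζ) with 1 < κ < 2 and m continuous,
|θ|^{2-κ} G(θ) → m(0) (α^{κ-1}/√π) ∫₀¹ exp(-α²/(4σ²)) (1-σ²)^{-κ/2} dσ as θ → 0. -/
theorem kernelG_asymptotics_at_zero_power
    (α κ : ℝ) (hα : 0 < α) (hκ₁ : 1 < κ) (hκ₂ : κ < 2)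
    (m : ℝ → ℝ) (hm : ContinuousOn m (Icc 0 α)) :
    Tendsto (fun θ : ℝ => |θ| ^ (2 - κ) * kernelG α (fun ζ => ζ ^ κ * m ζ) θ)
      (nhdsWithin 0 {(0:ℝ)}ᶜ)
      (nhds (m 0 * (α ^ (κ - 1) / Real.sqrt Real.pi) *
        ∫ σ in (0:ℝ)..1, Real.exp (-α ^ 2 / (4 * σ ^ 2)) * (1 - σ ^ 2) ^ (-(κ / 2)))) := by
  have hsmall : ∀ᶠ θ in nhdsWithin (0:ℝ) {(0:ℝ)}ᶜ, θ ≠ 0 ∧ |θ| < 1 := by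
    have h1 : ∀ᶠ θ in nhdsWithin (0:ℝ) {(0:ℝ)}ᶜ, θ ≠ 0 :=
      eventually_mem_nhdsWithin.mono (fun θ hθ => hθ)
    have h2 : ∀ᶠ θ : ℝ in nhds 0, |θ| < 1 := by
      filter_upwards [Metric.ball_mem_nhds (0:ℝ) one_pos] with θ hθ
      simpa [Real.dist_eq] using hθ
    exact h1.and (h2.filter_mono nhdsWithin_le_nhds)
  exact Tendsto.congr'
    (hsmall.mono fun θ hθ => (kernelG_subst α κ hα m θ hθ.1 hθ.2).symm)
    (kernelG_asymptotics_main α κ hα hκ₁ hκ₂ m hm)
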